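/- arXiv:1809.06591 — 5 statements merged into one kernel-verified Lean document; each statement's English description precedes it below -/
import Mathlib

section
/- Let A be a real m×n matrix with m ≤ n, and let A = B D Cᵀ be a singular value decomposition of A, where B is an m×m orthogonal matrix, C is an n×m matrix with Cᵀ C = I_m, and D is an m×m diagonal matrix with nonnegative entries (the singular values). Then V* = B Cᵀ satisfies V* V*ᵀ = I_m, ⟨A, V*⟩ = trace(D), and for every m×n matrix V with V Vᵀ = I_m one has ⟨A, V⟩ ≤ ⟨A, V*⟩; i.e., V* = B Cᵀ is a global optimizer of the linear functional ⟨A, V⟩ over the set {V : V Vᵀ = I_m}. -/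
open Matrix BigOperators

/-- Theorem 1 of the paper: if `A = B D Cᵀ` is an SVD of the `m × n` matrix `A` (`m ≤ n`),
with `B` an `m × m` orthogonal matrix, `C` an `n × m` matrix with orthonormal columns and
`D` diagonal with nonnegative entries, then `V* = B Cᵀ` has orthonormal rows, satisfies
`⟨A, V*⟩ = trace D`, and globally maximizes `⟨A, V⟩ = trace (Aᵀ V)` over `{V : V Vᵀ = I}`. -/
theorem svd_maximizes_frobenius_inner {m n : ℕ} (hmn : m ≤ n)
    (A : Matrix (Fin m) (Fin n) ℝ)
    (B D : Matrix (Fin m) (Fin m) ℝ) (C : Matrix (Fin n) (Fin m) ℝ)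
    (hB₁ : Bᵀ * B = 1) (hB₂ : B * Bᵀ = 1)
    (hC : Cᵀ * C = 1)
    (hDdiag : ∀ i j, i ≠ j → D i j = 0) (hDpos : ∀ i, 0 ≤ D i i)
    (hA : A = B * D * Cᵀ) :
    (B * Cᵀ) * (B * Cᵀ)ᵀ = 1 ∧
    (Aᵀ * (B * Cᵀ)).trace = D.trace ∧
    ∀ V : Matrix (Fin m) (Fin n) ℝ, V * Vᵀ = 1 →
      (Aᵀ * V).trace ≤ (Aᵀ * (B * Cᵀ)).trace := by
  have hDsymm : Dᵀ = D := by
    ext i j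
    by_cases h : i = j
    · subst h; rfl
    · rw [transpose_apply, hDdiag j i (Ne.symm h), hDdiag i j h]
  -- general trace formula for D times a matrix
  have htrD : ∀ M : Matrix (Fin m) (Fin m) ℝ, (D * M).trace = ∑ i, D i i * M i i := by
    intro M
    rw [Matrix.trace]
    apply Finset.sum_congr rfl
    intro i _
    rw [Matrix.diag_apply, Matrix.mul_apply]
    exact Finset.sum_eq_single i (fun j _ hj => by rw [hDdiag i j (Ne.symm hj), zero_mul])
      (fun h => absurd (Finset.mem_univ i) h)
  have key : ∀ V : Matrix (Fin m) (Fin n) ℝ,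
      (Aᵀ * V).trace = ∑ i, D i i * (Bᵀ * V * C) i i := by
    intro V
    rw [hA]
    have : ((B * D * Cᵀ)ᵀ * V) = C * (D * (Bᵀ * V)) := by
      simp only [transpose_mul, transpose_transpose, hDsymm, Matrix.mul_assoc]
    rw [this, Matrix.trace_mul_comm, ← htrD (Bᵀ * V * C)]
    congr 1
    simp [Matrix.mul_assoc]
  constructor
  · rw [transpose_mul, transpose_transpose, Matrix.mul_assoc,
      ← Matrix.mul_assoc Cᵀ, hC, Matrix.one_mul, hB₂]
  have hstar : (Aᵀ * (B * Cᵀ)).trace = D.trace := by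
    rw [key]
    have : Bᵀ * (B * Cᵀ) * C = 1 := by
      rw [← Matrix.mul_assoc, hB₁, Matrix.one_mul, hC]
    rw [this]
    simp [Matrix.trace]
  refine ⟨hstar, ?_⟩
  intro V hV
  rw [hstar, key]
  have hbound : ∀ i, (Bᵀ * V * C) i i ≤ 1 := by
    intro i
    have hf : ∑ j, ((Bᵀ * V) i j)^2 = 1 := by
      have : ((Bᵀ * V) * (Bᵀ * V)ᵀ) i i = (1 : Matrix (Fin m) (Fin m) ℝ) i i := by
        rw [transpose_mul, transpose_transpose, Matrix.mul_assoc,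
          ← Matrix.mul_assoc V, hV, Matrix.one_mul, hB₁]
      simpa [Matrix.mul_apply, sq, mul_comm] using this
    have hg : ∑ j, (C j i)^2 = 1 := by
      have : (Cᵀ * C) i i = (1 : Matrix (Fin m) (Fin m) ℝ) i i := by rw [hC]
      simpa [Matrix.mul_apply, sq] using this
    have hcs := Finset.sum_mul_sq_le_sq_mul_sq Finset.univ
      (fun j => (Bᵀ * V) i j) (fun j => C j i)
    rw [hf, hg, mul_one] at hcs
    have heq : (Bᵀ * V * C) i i = ∑ j, (Bᵀ * V) i j * C j i := by rw [Matrix.mul_apply]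
    nlinarith [hcs, heq]
  calc ∑ i, D i i * (Bᵀ * V * C) i i ≤ ∑ i, D i i * 1 :=
        Finset.sum_le_sum (fun i _ => mul_le_mul_of_nonneg_left (hbound i) (hDpos i))
    _ = D.trace := by simp [Matrix.trace]
end

section
/- Let G be a real p×s matrix and r ≤ s with rank(G) ≤ r. Suppose V* ∈ ℝ^{s×r} is a global minimizer of ‖G V‖₁ over the set F₁ = {V ∈ ℝ^{s×r} : Vᵀ V = I_r, ‖G V‖_F = ‖G‖_F}. Then the pair (G V*, V*) is a global minimizer of ‖U‖₁ over the set F₂ = {(U, V) ∈ ℝ^{p×r} × ℝ^{s×r} : G = U Vᵀ, Vᵀ V = I_r}. -/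
open Matrix BigOperators

/-- The Frobenius norm of a real matrix, `‖M‖_F = sqrt (trace (Mᵀ M))`. -/
noncomputable def frobNorm {p q : ℕ} (M : Matrix (Fin p) (Fin q) ℝ) : ℝ :=
  Real.sqrt ((Mᵀ * M).trace)

/-- The entrywise ℓ₁ norm of a real matrix. -/
def l1Norm {p q : ℕ} (M : Matrix (Fin p) (Fin q) ℝ) : ℝ :=
  ∑ i, ∑ j, |M i j|

lemma trace_sq {p q : ℕ} (M : Matrix (Fin p) (Fin q) ℝ) :
    (Mᵀ * M).trace = ∑ j, ∑ i, (M i j)^2 := by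
  simp [Matrix.trace, Matrix.diag, Matrix.mul_apply, sq, Matrix.transpose_apply]

lemma trace_sq_nonneg {p q : ℕ} (M : Matrix (Fin p) (Fin q) ℝ) :
    0 ≤ (Mᵀ * M).trace := by
  rw [trace_sq]
  exact Finset.sum_nonneg fun j _ => Finset.sum_nonneg fun i _ => sq_nonneg _

lemma frob_eq_trace_eq {p q p' q' : ℕ} (M : Matrix (Fin p) (Fin q) ℝ)
    (N : Matrix (Fin p') (Fin q') ℝ) (h : frobNorm M = frobNorm N) :
    (Mᵀ * M).trace = (Nᵀ * N).trace := by
  have hM := trace_sq_nonneg M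
  have hN := trace_sq_nonneg N
  have : Real.sqrt ((Mᵀ * M).trace) = Real.sqrt ((Nᵀ * N).trace) := h
  calc (Mᵀ * M).trace = Real.sqrt ((Mᵀ * M).trace) ^ 2 := (Real.sq_sqrt hM).symm
    _ = Real.sqrt ((Nᵀ * N).trace) ^ 2 := by rw [this]
    _ = (Nᵀ * N).trace := Real.sq_sqrt hN

lemma trace_zero_eq_zero {p q : ℕ} (M : Matrix (Fin p) (Fin q) ℝ)
    (h : (Mᵀ * M).trace = 0) : M = 0 := by
  rw [trace_sq] at h
  ext i j
  have := (Finset.sum_eq_zero_iff_of_nonneg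
    (fun j _ => Finset.sum_nonneg fun i _ => sq_nonneg (M i j))).mp h j (Finset.mem_univ j)
  have := (Finset.sum_eq_zero_iff_of_nonneg
    (fun i _ => sq_nonneg (M i j))).mp this i (Finset.mem_univ i)
  simpa using pow_eq_zero_iff (n := 2) (by norm_num) |>.mp this

/-- Forward direction of Theorem 2 of the paper: if `V*` globally minimizes `‖G V‖₁`
over `F₁ = {V : Vᵀ V = I, ‖G V‖_F = ‖G‖_F}`, then `(G V*, V*)` globally minimizes
`‖U‖₁` over `F₂ = {(U, V) : G = U Vᵀ, Vᵀ V = I}`. -/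
theorem minimizer_F1_to_F2 {p s r : ℕ} (hrs : r ≤ s)
    (G : Matrix (Fin p) (Fin s) ℝ) (hrank : G.rank ≤ r)
    (Vstar : Matrix (Fin s) (Fin r) ℝ)
    (hfeas₁ : Vstarᵀ * Vstar = 1) (hfeas₂ : frobNorm (G * Vstar) = frobNorm G)
    (hmin : ∀ V : Matrix (Fin s) (Fin r) ℝ,
      Vᵀ * V = 1 → frobNorm (G * V) = frobNorm G →
      l1Norm (G * Vstar) ≤ l1Norm (G * V)) :
    (G = (G * Vstar) * Vstarᵀ ∧ Vstarᵀ * Vstar = 1) ∧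
    ∀ (U : Matrix (Fin p) (Fin r) ℝ) (V : Matrix (Fin s) (Fin r) ℝ),
      G = U * Vᵀ → Vᵀ * V = 1 → l1Norm (G * Vstar) ≤ l1Norm U := by
  have htr := frob_eq_trace_eq _ _ hfeas₂
  -- trace computation: ‖G - G V Vᵀ‖² = ‖G‖² - ‖GV‖²
  have key : G = (G * Vstar) * Vstarᵀ := by
    set P := G - G * Vstar * Vstarᵀ with hP
    have hPtr : (Pᵀ * P).trace = 0 := by
      have expand : Pᵀ * P =
          Gᵀ * G - Gᵀ * (G * Vstar) * Vstarᵀ - Vstar * (G * Vstar)ᵀ * G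
            + Vstar * ((G * Vstar)ᵀ * (G * Vstar)) * Vstarᵀ := by
        simp only [hP, Matrix.sub_mul, Matrix.mul_sub, Matrix.transpose_sub,
          Matrix.transpose_mul, Matrix.transpose_transpose]
        simp only [Matrix.mul_assoc]
        abel
      rw [expand]
      simp only [Matrix.trace_sub, Matrix.trace_add]
      have h1 : (Gᵀ * (G * Vstar) * Vstarᵀ).trace = ((G * Vstar)ᵀ * (G * Vstar)).trace := by
        rw [Matrix.trace_mul_comm]
        simp only [Matrix.transpose_mul]
        rw [Matrix.mul_assoc]
      have h2 : (Vstar * (G * Vstar)ᵀ * G).trace = ((G * Vstar)ᵀ * (G * Vstar)).trace := by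
        rw [Matrix.mul_assoc, Matrix.trace_mul_comm]
        simp only [Matrix.transpose_mul]
        rw [Matrix.mul_assoc]
      have h3 : (Vstar * ((G * Vstar)ᵀ * (G * Vstar)) * Vstarᵀ).trace
          = ((G * Vstar)ᵀ * (G * Vstar)).trace := by
        rw [Matrix.trace_mul_comm, ← Matrix.mul_assoc, hfeas₁, Matrix.one_mul]
      rw [h1, h2, h3, htr]
      ring
    have h0 : G - G * Vstar * Vstarᵀ = 0 := trace_zero_eq_zero _ hPtr
    exact sub_eq_zero.mp h0
  refine ⟨⟨key, hfeas₁⟩, ?_⟩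
  intro U V hG hV
  have hGV : G * V = U := by
    rw [hG, Matrix.mul_assoc, hV, Matrix.mul_one]
  have hfrob : frobNorm (G * V) = frobNorm G := by
    unfold frobNorm
    congr 1
    rw [hGV, hG]
    simp only [Matrix.transpose_mul, Matrix.transpose_transpose]
    rw [Matrix.mul_assoc V, Matrix.trace_mul_comm V]
    simp only [Matrix.mul_assoc]
    rw [hV, Matrix.mul_one]
  have := hmin V hV hfrob
  rwa [hGV] at this
end

section
/- Let G be a real p×s matrix and r ≤ s with rank(G) ≤ r. Then the infimum of ‖G V‖₁ over {V ∈ ℝ^{s×r} : Vᵀ V = I_r, ‖G V‖_F = ‖G‖_F} equals the infimum of ‖U‖₁ over {(U, V) ∈ ℝ^{p×r} × ℝ^{s×r} : G = U Vᵀ, Vᵀ V = I_r}; moreover both feasible sets are nonempty, so the common value S_{E-TV}(G) is well defined. -/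
/-!
Both problems range over the same values of `‖U‖₁`. If `Vᵀ V = I`, then `V Vᵀ` is an orthogonal
projection, and Pythagoras gives `‖G‖_F² = ‖G V‖_F² + ‖G - G V Vᵀ‖_F²`; so `‖G V‖_F = ‖G‖_F`
says exactly that `G = (G V) Vᵀ`, while conversely `G = U Vᵀ` forces `U = G V`. Both feasible
sets are nonempty because the row space of `G` has dimension at most `r ≤ s`, so it lies in the
span of `r` orthonormal vectors of `ℝˢ`, which form the columns of a feasible `V`.
-/

open Matrix BigOperators

open Module

theorem Submodule.exists_le_finrank_eq {K V : Type*} [DivisionRing K] [AddCommGroup V]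
    [Module K V] [FiniteDimensional K V] (W : Submodule K V) {n : ℕ}
    (hWn : finrank K W ≤ n) (hn : n ≤ finrank K V) :
    ∃ W' : Submodule K V, W ≤ W' ∧ finrank K W' = n := by
  induction n, hWn using Nat.le_induction with
  | base => exact ⟨W, le_rfl, rfl⟩
  | succ n _ ih =>
    obtain ⟨W', hWW', hW'⟩ := ih (by omega)
    have hlt : W' < ⊤ := by
      rw [lt_top_iff_ne_top]
      rintro rfl
      rw [finrank_top] at hW'
      omega
    obtain ⟨x, -, hx⟩ := SetLike.exists_of_lt hlt
    exact ⟨W' ⊔ K ∙ x, le_sup_of_le_left hWW', by rw [finrank_sup_span_singleton hx, hW']⟩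

theorem Submodule.exists_orthonormal_sum_inner_smul_eq {𝕜 E ι : Type*} [RCLike 𝕜]
    [NormedAddCommGroup E] [InnerProductSpace 𝕜 E] [FiniteDimensional 𝕜 E] [Fintype ι]
    (W : Submodule 𝕜 E) (hWι : finrank 𝕜 W ≤ Fintype.card ι)
    (hι : Fintype.card ι ≤ finrank 𝕜 E) :
    ∃ v : ι → E, Orthonormal 𝕜 v ∧ ∀ x ∈ W, ∑ i, inner 𝕜 (v i) x • v i = x := by
  obtain ⟨W', hWW', hW'⟩ := W.exists_le_finrank_eq hWι hι
  let b : OrthonormalBasis ι 𝕜 W' :=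
    (stdOrthonormalBasis 𝕜 W').reindex (Fintype.equivFinOfCardEq hW'.symm).symm
  refine ⟨fun i => b i, b.orthonormal.comp_linearIsometry W'.subtypeₗᵢ, fun x hx => ?_⟩
  simpa using congrArg Subtype.val (b.sum_repr' ⟨x, hWW' hx⟩)

namespace Matrix

variable {m n k : Type*} [Fintype n]

theorem sub_mul_mul_transpose_mul_transpose [Fintype k] [DecidableEq k] (M : Matrix m n ℝ)
    {V : Matrix n k ℝ} (hV : Vᵀ * V = 1) :
    (M - M * V * Vᵀ) * (M - M * V * Vᵀ)ᵀ = M * Mᵀ - (M * V) * (M * V)ᵀ := by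
  have hPP : M * V * Vᵀ * (M * V * Vᵀ)ᵀ = (M * V) * (M * V)ᵀ := by
    simp only [transpose_mul, transpose_transpose, Matrix.mul_assoc]
    rw [← Matrix.mul_assoc Vᵀ V, hV, Matrix.one_mul]
  have hP : M * (M * V * Vᵀ)ᵀ = (M * V) * (M * V)ᵀ := by
    simp only [transpose_mul, transpose_transpose, Matrix.mul_assoc]
  have hP' : M * V * Vᵀ * Mᵀ = (M * V) * (M * V)ᵀ := by
    simp only [transpose_mul, Matrix.mul_assoc]
  rw [transpose_sub, Matrix.sub_mul, Matrix.mul_sub, Matrix.mul_sub, hPP, hP, hP']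
  abel

theorem trace_sub_mul_mul_transpose [Fintype m] [Fintype k] [DecidableEq k] (M : Matrix m n ℝ)
    {V : Matrix n k ℝ} (hV : Vᵀ * V = 1) :
    ((M - M * V * Vᵀ)ᵀ * (M - M * V * Vᵀ)).trace =
      (Mᵀ * M).trace - ((M * V)ᵀ * (M * V)).trace := by
  rw [trace_mul_comm, sub_mul_mul_transpose_mul_transpose M hV, trace_sub, trace_mul_comm M,
    trace_mul_comm (M * V)]

theorem trace_transpose_mul_self_nonneg [Fintype m] (M : Matrix m n ℝ) :
    0 ≤ (Mᵀ * M).trace := by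
  simpa using (posSemidef_conjTranspose_mul_self M).trace_nonneg

theorem trace_transpose_mul_self_eq_zero_iff [Fintype m] {M : Matrix m n ℝ} :
    (Mᵀ * M).trace = 0 ↔ M = 0 := by
  simpa using trace_conjTranspose_mul_self_eq_zero_iff (A := M)

theorem transpose_mul_self_eq_one_of_orthonormal [DecidableEq k] {v : k → EuclideanSpace ℝ n}
    (hv : Orthonormal ℝ v) : (of fun j t => v t j)ᵀ * of (fun j t => v t j) = 1 := by
  simpa using (gram_eq_conjTranspose_mul (EuclideanSpace.basisFun n ℝ) v).symm.trans
    (gram_eq_one_iff_orthonormal.mpr hv)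

theorem mul_mul_transpose_eq_self_of_sum_inner_smul [Fintype k] {v : k → EuclideanSpace ℝ n}
    (M : Matrix m n ℝ)
    (hM : ∀ i, ∑ t, inner ℝ (v t) (WithLp.toLp 2 (M i)) • v t = WithLp.toLp 2 (M i)) :
    M * of (fun j t => v t j) * (of fun j t => v t j)ᵀ = M := by
  ext i j
  have hMij := congrArg (· j) (hM i)
  simp only [EuclideanSpace.inner_eq_star_dotProduct, star_trivial, WithLp.ofLp_sum,
    WithLp.ofLp_smul, Finset.sum_apply, Pi.smul_apply, smul_eq_mul] at hMij
  simpa [mul_apply, dotProduct] using hMij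

theorem exists_transpose_mul_eq_one_and_mul_mul_transpose_eq_self [Fintype m] [Fintype k]
    [DecidableEq k] (M : Matrix m n ℝ) (hMk : M.rank ≤ Fintype.card k)
    (hkn : Fintype.card k ≤ Fintype.card n) :
    ∃ V : Matrix n k ℝ, Vᵀ * V = 1 ∧ M * V * Vᵀ = M := by
  let W : Submodule ℝ (EuclideanSpace ℝ n) :=
    Submodule.span ℝ (Set.range fun i => WithLp.toLp 2 (M i))
  have hW : finrank ℝ W = M.rank := by
    rw [rank_eq_finrank_span_row, ← (WithLp.linearEquiv 2 ℝ (n → ℝ)).symm.finrank_map_eq,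
      Submodule.map_span, ← Set.range_comp]
    rfl
  obtain ⟨v, hv, hWv⟩ := W.exists_orthonormal_sum_inner_smul_eq (hW ▸ hMk) (by simpa using hkn)
  exact ⟨_, transpose_mul_self_eq_one_of_orthonormal hv,
    mul_mul_transpose_eq_self_of_sum_inner_smul M fun i => hWv _ (Submodule.subset_span ⟨i, rfl⟩)⟩

end Matrix

theorem frobNorm_mul_eq_iff {p s r : ℕ} (G : Matrix (Fin p) (Fin s) ℝ)
    {V : Matrix (Fin s) (Fin r) ℝ} (hV : Vᵀ * V = 1) :
    frobNorm (G * V) = frobNorm G ↔ G * V * Vᵀ = G := by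
  rw [frobNorm, frobNorm, Real.sqrt_inj (trace_transpose_mul_self_nonneg _)
    (trace_transpose_mul_self_nonneg _), eq_comm, ← sub_eq_zero,
    ← trace_sub_mul_mul_transpose G hV, trace_transpose_mul_self_eq_zero_iff, sub_eq_zero, eq_comm]

theorem exists_frobNorm_eq_iff_exists_factorization {p s r : ℕ} (G : Matrix (Fin p) (Fin s) ℝ)
    (x : ℝ) :
    (∃ V : Matrix (Fin s) (Fin r) ℝ,
        Vᵀ * V = 1 ∧ frobNorm (G * V) = frobNorm G ∧ x = l1Norm (G * V)) ↔
      ∃ (U : Matrix (Fin p) (Fin r) ℝ) (V : Matrix (Fin s) (Fin r) ℝ),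
        G = U * Vᵀ ∧ Vᵀ * V = 1 ∧ x = l1Norm U := by
  constructor
  · rintro ⟨V, hV, hfrob, rfl⟩
    exact ⟨G * V, V, ((frobNorm_mul_eq_iff G hV).mp hfrob).symm, hV, rfl⟩
  · rintro ⟨U, V, rfl, hV, rfl⟩
    have hUV : U * Vᵀ * V = U := by rw [Matrix.mul_assoc, hV, Matrix.mul_one]
    exact ⟨V, hV, (frobNorm_mul_eq_iff _ hV).mpr (by rw [hUV]), by rw [hUV]⟩

/-- Theorem 2 of the paper (on the level of optimal values): for `G` of rank at most
`r ≤ s`, the infimum of `‖G V‖₁` over `F₁ = {V : Vᵀ V = I, ‖G V‖_F = ‖G‖_F}` equals the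
infimum of `‖U‖₁` over `F₂ = {(U,V) : G = U Vᵀ, Vᵀ V = I}`, and both feasible sets are
nonempty, so the common value `S_{E-TV}(G)` is well defined. -/
theorem inf_F1_eq_inf_F2 {p s r : ℕ} (hrs : r ≤ s)
    (G : Matrix (Fin p) (Fin s) ℝ) (hrank : G.rank ≤ r) :
    sInf {x : ℝ | ∃ V : Matrix (Fin s) (Fin r) ℝ,
        Vᵀ * V = 1 ∧ frobNorm (G * V) = frobNorm G ∧ x = l1Norm (G * V)} =
      sInf {x : ℝ | ∃ (U : Matrix (Fin p) (Fin r) ℝ) (V : Matrix (Fin s) (Fin r) ℝ),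
        G = U * Vᵀ ∧ Vᵀ * V = 1 ∧ x = l1Norm U} ∧
    {x : ℝ | ∃ V : Matrix (Fin s) (Fin r) ℝ,
        Vᵀ * V = 1 ∧ frobNorm (G * V) = frobNorm G ∧ x = l1Norm (G * V)}.Nonempty ∧
    {x : ℝ | ∃ (U : Matrix (Fin p) (Fin r) ℝ) (V : Matrix (Fin s) (Fin r) ℝ),
        G = U * Vᵀ ∧ Vᵀ * V = 1 ∧ x = l1Norm U}.Nonempty := by
  obtain ⟨V₀, hV₀, hGV₀⟩ := G.exists_transpose_mul_eq_one_and_mul_mul_transpose_eq_self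
    (k := Fin r) (by simpa using hrank) (by simpa using hrs)
  exact ⟨congrArg sInf (Set.ext fun x => exists_frobNorm_eq_iff_exists_factorization G x),
    ⟨_, V₀, hV₀, (frobNorm_mul_eq_iff G hV₀).mpr hGV₀, rfl⟩,
    ⟨_, G * V₀, V₀, hGV₀.symm, hV₀, rfl⟩⟩
end

section
/- Fix μ > 0, a real s×r matrix V with Vᵀ V = I_r, and a real p×s matrix B. Define the entrywise soft-thresholding S_{1/μ} by applying, to each entry c of a matrix, the map c ↦ c − 1/μ if c > 1/μ, c ↦ c + 1/μ if c < −1/μ, and c ↦ 0 otherwise. Then U* = S_{1/μ}(B V) is a global minimizer over U ∈ ℝ^{p×r} of the function U ↦ ‖U‖₁ + (μ/2)‖U Vᵀ − B‖_F². -/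
open Matrix BigOperators

/-- The scalar soft-thresholding operator `S_Δ`. -/
noncomputable def softThresh (Δ a : ℝ) : ℝ :=
  if a > Δ then a - Δ else if a < -Δ then a + Δ else 0

/-- Entrywise soft-thresholding of a matrix. -/
noncomputable def softThreshMat {p q : ℕ} (Δ : ℝ)
    (C : Matrix (Fin p) (Fin q) ℝ) : Matrix (Fin p) (Fin q) ℝ :=
  Matrix.of fun i j => softThresh Δ (C i j)

/-! Since `V` has orthonormal columns, `‖U Vᵀ - B‖_F² = ‖U - B V‖_F² + ‖B‖_F² - ‖B V‖_F²`, so up to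
a constant the objective is `∑ᵢⱼ (|Uᵢⱼ| + (μ/2)(Uᵢⱼ - (B V)ᵢⱼ)²)`. It separates into scalar problems
`u ↦ |u| + (μ/2)(u - c)²`, each minimized at the soft-threshold `S_{1/μ}(c)`. -/

theorem mul_abs_softThresh_add_sq_le {Δ : ℝ} (hΔ : 0 ≤ Δ) (c u : ℝ) :
    Δ * |softThresh Δ c| + (softThresh Δ c - c) ^ 2 / 2 ≤ Δ * |u| + (u - c) ^ 2 / 2 := by
  have hu : -|u| ≤ u ∧ u ≤ |u| := abs_le.mp le_rfl
  -- in each branch the gap is half a square plus a nonnegative multiple of `|u| ∓ u`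
  unfold softThresh
  split_ifs with hpos hneg
  · rw [abs_of_pos (sub_pos.mpr hpos)]
    nlinarith [sq_nonneg (u - c + Δ)]
  · rw [abs_of_neg (by linarith)]
    nlinarith [sq_nonneg (u - c - Δ)]
  · rw [abs_zero]
    nlinarith [sq_nonneg u, abs_nonneg u]

theorem abs_softThresh_inv_add_sq_le {μ : ℝ} (hμ : 0 < μ) (c u : ℝ) :
    |softThresh (1 / μ) c| + μ / 2 * (softThresh (1 / μ) c - c) ^ 2 ≤
      |u| + μ / 2 * (u - c) ^ 2 := by
  have h := mul_le_mul_of_nonneg_left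
    (mul_abs_softThresh_add_sq_le (one_div_nonneg.mpr hμ.le) c u) hμ.le
  field_simp at h
  linarith

section Trace

variable {m n R : Type*} [Fintype m] [Fintype n]

theorem trace_transpose_mul_self [CommSemiring R] (M : Matrix m n R) :
    (Mᵀ * M).trace = ∑ i, ∑ j, M i j ^ 2 := by
  simp only [trace, diag, mul_apply, transpose_apply, sq]
  exact Finset.sum_comm

theorem trace_transpose_mul_self_mul_transpose_sub {k : Type*} [Fintype k] [DecidableEq k]
    [CommRing R] {V : Matrix n k R} (hV : Vᵀ * V = 1) (U : Matrix m k R) (B : Matrix m n R) :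
    ((U * Vᵀ - B)ᵀ * (U * Vᵀ - B)).trace =
      ((U - B * V)ᵀ * (U - B * V)).trace + (Bᵀ * B).trace - ((B * V)ᵀ * (B * V)).trace := by
  have hUU : (V * Uᵀ * (U * Vᵀ)).trace = (Uᵀ * U).trace := by
    rw [trace_mul_cycle', Matrix.mul_assoc, ← Matrix.mul_assoc Vᵀ, hV, Matrix.one_mul]
  have hUB : (V * Uᵀ * B).trace = (Uᵀ * (B * V)).trace := by
    rw [trace_mul_cycle, trace_mul_comm]
  have hBU : (Bᵀ * (U * Vᵀ)).trace = (Vᵀ * Bᵀ * U).trace := by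
    rw [← Matrix.mul_assoc, trace_mul_cycle]
  simp only [transpose_sub, transpose_mul, transpose_transpose, Matrix.sub_mul, Matrix.mul_sub,
    trace_sub]
  rw [hUU, hUB, hBU]
  abel

end Trace

theorem sq_frobNorm {p q : ℕ} (M : Matrix (Fin p) (Fin q) ℝ) :
    frobNorm M ^ 2 = (Mᵀ * M).trace :=
  Real.sq_sqrt (by rw [trace_transpose_mul_self]; positivity)

theorem sq_frobNorm_mul_transpose_sub {p s r : ℕ} {V : Matrix (Fin s) (Fin r) ℝ}
    (hV : Vᵀ * V = 1) (U : Matrix (Fin p) (Fin r) ℝ) (B : Matrix (Fin p) (Fin s) ℝ) :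
    frobNorm (U * Vᵀ - B) ^ 2 =
      frobNorm (U - B * V) ^ 2 + frobNorm B ^ 2 - frobNorm (B * V) ^ 2 := by
  simp only [sq_frobNorm, trace_transpose_mul_self_mul_transpose_sub hV]

theorem l1Norm_add_mul_sq_frobNorm_sub {p q : ℕ} (a : ℝ) (W C : Matrix (Fin p) (Fin q) ℝ) :
    l1Norm W + a * frobNorm (W - C) ^ 2 = ∑ i, ∑ j, (|W i j| + a * (W i j - C i j) ^ 2) := by
  simp only [l1Norm, sq_frobNorm, trace_transpose_mul_self, Matrix.sub_apply, Finset.mul_sum,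
    ← Finset.sum_add_distrib]

theorem l1Norm_add_sq_frobNorm_softThreshMat_le {p q : ℕ} {μ : ℝ} (hμ : 0 < μ)
    (C W : Matrix (Fin p) (Fin q) ℝ) :
    l1Norm (softThreshMat (1 / μ) C) + μ / 2 * frobNorm (softThreshMat (1 / μ) C - C) ^ 2 ≤
      l1Norm W + μ / 2 * frobNorm (W - C) ^ 2 := by
  simp only [l1Norm_add_mul_sq_frobNorm_sub]
  exact Finset.sum_le_sum fun i _ => Finset.sum_le_sum fun j _ =>
    abs_softThresh_inv_add_sq_le hμ (C i j) (W i j)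

/-- Closed-form solution (Eq. (22)) of the U-subproblem (20): for `V` with orthonormal
columns, `U* = S_{1/μ}(B V)` globally minimizes `U ↦ ‖U‖₁ + (μ/2)‖U Vᵀ − B‖_F²`. -/
theorem softThreshMat_minimizes_U_subproblem {p s r : ℕ} (μ : ℝ) (hμ : 0 < μ)
    (V : Matrix (Fin s) (Fin r) ℝ) (hV : Vᵀ * V = 1)
    (B : Matrix (Fin p) (Fin s) ℝ) :
    ∀ U : Matrix (Fin p) (Fin r) ℝ,
      l1Norm (softThreshMat (1 / μ) (B * V)) +
          (μ / 2) * frobNorm (softThreshMat (1 / μ) (B * V) * Vᵀ - B) ^ 2 ≤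
        l1Norm U + (μ / 2) * frobNorm (U * Vᵀ - B) ^ 2 := by
  intro U
  have hmin := l1Norm_add_sq_frobNorm_softThreshMat_le hμ (B * V) U
  rw [sq_frobNorm_mul_transpose_sub hV, sq_frobNorm_mul_transpose_sub hV]
  linarith
end

section
/- Let U be a real p×r matrix and A a real p×s matrix with r ≤ s, and let Aᵀ U = B D Cᵀ be a singular value decomposition of the s×r matrix Aᵀ U, where B is an s×r matrix with Bᵀ B = I_r, C is an r×r orthogonal matrix, and D is an r×r diagonal matrix with nonnegative entries. Then V* = B Cᵀ satisfies V*ᵀ V* = I_r and is a global minimizer over V ∈ ℝ^{s×r} with Vᵀ V = I_r of the function V ↦ ‖U Vᵀ − A‖_F². -/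
open Matrix BigOperators

/-- Closed-form solution (Eq. (26)) of the V-subproblem: if `Aᵀ U = B D Cᵀ` is an SVD
of the `s × r` matrix `Aᵀ U` (with `B` having orthonormal columns, `C` an `r × r`
orthogonal matrix and `D` diagonal with nonnegative entries), then `V* = B Cᵀ` has
orthonormal columns and globally minimizes `V ↦ ‖U Vᵀ − A‖_F²` over `{V : Vᵀ V = I}`. -/
theorem svd_minimizes_V_subproblem {p s r : ℕ} (hrs : r ≤ s)
    (U : Matrix (Fin p) (Fin r) ℝ) (A : Matrix (Fin p) (Fin s) ℝ)
    (B : Matrix (Fin s) (Fin r) ℝ) (C D : Matrix (Fin r) (Fin r) ℝ)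
    (hB : Bᵀ * B = 1) (hC₁ : Cᵀ * C = 1) (hC₂ : C * Cᵀ = 1)
    (hDdiag : ∀ i j, i ≠ j → D i j = 0) (hDpos : ∀ i, 0 ≤ D i i)
    (hSVD : Aᵀ * U = B * D * Cᵀ) :
    (B * Cᵀ)ᵀ * (B * Cᵀ) = 1 ∧
    ∀ V : Matrix (Fin s) (Fin r) ℝ, Vᵀ * V = 1 →
      frobNorm (U * (B * Cᵀ)ᵀ - A) ^ 2 ≤ frobNorm (U * Vᵀ - A) ^ 2 := by
  have hVstar : (B * Cᵀ)ᵀ * (B * Cᵀ) = 1 := by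
    have : (B * Cᵀ)ᵀ * (B * Cᵀ) = C * (Bᵀ * B) * Cᵀ := by
      simp [Matrix.transpose_mul, Matrix.mul_assoc]
    rw [this, hB, Matrix.mul_one, hC₂]
  refine ⟨hVstar, ?_⟩
  intro V hV
  -- frobNorm squared equals trace
  have frob_sq : ∀ (M : Matrix (Fin p) (Fin s) ℝ),
      frobNorm M ^ 2 = (Mᵀ * M).trace := by
    intro M
    have h0 : 0 ≤ (Mᵀ * M).trace := by
      rw [Matrix.trace]
      apply Finset.sum_nonneg
      intro j _
      simp only [Matrix.diag_apply, Matrix.mul_apply, Matrix.transpose_apply]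
      exact Finset.sum_nonneg fun i _ => mul_self_nonneg _
    rw [frobNorm, Real.sq_sqrt h0]
  -- expansion of the objective
  have expand : ∀ (W : Matrix (Fin s) (Fin r) ℝ), Wᵀ * W = 1 →
      ((U * Wᵀ - A)ᵀ * (U * Wᵀ - A)).trace
        = (Uᵀ * U).trace + (Aᵀ * A).trace - 2 * (Wᵀ * (B * D * Cᵀ)).trace := by
    intro W hW
    have e1 : (U * Wᵀ - A)ᵀ * (U * Wᵀ - A)
        = W * Uᵀ * (U * Wᵀ) - W * Uᵀ * A - Aᵀ * (U * Wᵀ) + Aᵀ * A := by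
      rw [Matrix.transpose_sub, Matrix.transpose_mul, Matrix.transpose_transpose]
      simp only [Matrix.sub_mul, Matrix.mul_sub]
      abel
    rw [e1, Matrix.trace_add, Matrix.trace_sub, Matrix.trace_sub]
    have t1 : (W * Uᵀ * (U * Wᵀ)).trace = (Uᵀ * U).trace := by
      have : W * Uᵀ * (U * Wᵀ) = W * (Uᵀ * U * Wᵀ) := by
        simp [Matrix.mul_assoc]
      rw [this, Matrix.trace_mul_comm, Matrix.mul_assoc, hW, Matrix.mul_one]
    have t2 : (W * Uᵀ * A).trace = (Wᵀ * (B * D * Cᵀ)).trace := by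
      rw [← Matrix.trace_transpose (W * Uᵀ * A)]
      have : (W * Uᵀ * A)ᵀ = Aᵀ * U * Wᵀ := by
        simp [Matrix.transpose_mul, Matrix.mul_assoc]
      rw [this, hSVD, Matrix.trace_mul_comm]
    have t3 : (Aᵀ * (U * Wᵀ)).trace = (Wᵀ * (B * D * Cᵀ)).trace := by
      rw [← Matrix.mul_assoc, hSVD, Matrix.trace_mul_comm]
    rw [t1, t2, t3]
    ring
  -- trace at the candidate minimizer
  have eq_star : ((B * Cᵀ)ᵀ * (B * D * Cᵀ)).trace = D.trace := by
    have h1 : (B * Cᵀ)ᵀ * (B * D * Cᵀ) = C * D * Cᵀ := by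
      have : (B * Cᵀ)ᵀ * (B * D * Cᵀ) = C * (Bᵀ * B) * (D * Cᵀ) := by
        simp [Matrix.transpose_mul, Matrix.mul_assoc]
      rw [this, hB, Matrix.mul_one, ← Matrix.mul_assoc]
    rw [h1, Matrix.trace_mul_comm, ← Matrix.mul_assoc, hC₁, Matrix.one_mul]
  -- key inequality
  have key : (Vᵀ * (B * D * Cᵀ)).trace ≤ D.trace := by
    set M := V * C with hM
    have hMM : Mᵀ * M = 1 := by
      have : Mᵀ * M = Cᵀ * (Vᵀ * V) * C := by
        simp [hM, Matrix.transpose_mul, Matrix.mul_assoc]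
      rw [this, hV, Matrix.mul_one, hC₁]
    have htr : (Vᵀ * (B * D * Cᵀ)).trace = ((Mᵀ * B) * D).trace := by
      have h2 : Vᵀ * (B * D * Cᵀ) = (Vᵀ * B * D) * Cᵀ := by
        simp [Matrix.mul_assoc]
      rw [h2, Matrix.trace_mul_comm]
      congr 1
      simp [hM, Matrix.transpose_mul, Matrix.mul_assoc]
    rw [htr]
    -- diagonal entries of Mᵀ B are at most 1
    have hdiag : ∀ i, (Mᵀ * B) i i ≤ 1 := by
      intro i
      have hMi : (Mᵀ * M) i i = 1 := by rw [hMM]; simp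
      have hBi : (Bᵀ * B) i i = 1 := by rw [hB]; simp
      have h2 : 2 * (Mᵀ * B) i i ≤ (Mᵀ * M) i i + (Bᵀ * B) i i := by
        simp only [Matrix.mul_apply, Matrix.transpose_apply]
        rw [Finset.mul_sum, ← Finset.sum_add_distrib]
        apply Finset.sum_le_sum
        intro k _
        nlinarith [sq_nonneg (M k i - B k i)]
      rw [hMi, hBi] at h2
      linarith
    -- compute trace using diagonality of D
    have htr2 : ((Mᵀ * B) * D).trace = ∑ i, (Mᵀ * B) i i * D i i := by
      rw [Matrix.trace]
      apply Finset.sum_congr rfl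
      intro i _
      simp only [Matrix.diag_apply, Matrix.mul_apply]
      rw [Finset.sum_eq_single i]
      · intro j _ hji
        rw [hDdiag j i hji, mul_zero]
      · intro h; exact absurd (Finset.mem_univ i) h
    rw [htr2, Matrix.trace]
    apply Finset.sum_le_sum
    intro i _
    simpa using mul_le_of_le_one_left (hDpos i) (hdiag i)
  rw [frob_sq, frob_sq, expand V hV, expand (B * Cᵀ) hVstar, eq_star]
  linarith
end
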